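/- Let $H^{p-1}$ be an $R_{p-1}$-periodic $L^2$ function, $h_p$ a $C^1$ function of period 1 with $\|h_p'\|_\infty \le K_1$ and unit variance, $\gamma_p > 0$, and $R_p = r_p R_{p-1}$ with $r_p$ a positive integer. Set $H^p(x) = H^{p-1}(x) + \gamma_p h_p(x/R_p)$. Then $\big|\mathrm{Var}(H^p) - \mathrm{Var}(H^{p-1}) - \gamma_p^2\big| \le 2\gamma_p K_1 r_p^{-1}\sqrt{\mathrm{Var}(H^{p-1})}$, where variances are taken over one period of the respective functions. -/

import Mathlib

/-!
Write `R = r R'` and `G(x) = γ h(x / R)`. Over `[0, R]`,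
`Var (H + G) = Var H + Var G + 2 Cov (H, G)`; periodicity gives `Var_R H = Var_{R'} H` and the
change of variables `x = R t` gives `Var_R G = γ² Var_1 h = γ²`. Only the covariance remains. The
centred function `H₀ = H - mean H` integrates to zero over each of the `r` periods `[kR', (k+1)R']`,
so on each period `G` may be replaced by `G - G(kR')`, which is at most `γ K₁ R' / R` in absolute
value because `G` is `γ K₁ / R`-Lipschitz. Hence `|Cov (H, G)| ≤ (γ K₁ / r) · mean |H₀|`, and
`mean |H₀| ≤ √(Var H)` by Cauchy–Schwarz, i.e. by `Var |H₀| ≥ 0`.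
-/

open MeasureTheory intervalIntegral
open scoped NNReal

/-- Variance of a periodic function over one period `[0, R]`. -/
noncomputable def perVar (R : ℝ) (f : ℝ → ℝ) : ℝ :=
  (1 / R) * ∫ x in (0:ℝ)..R, (f x - (1 / R) * ∫ y in (0:ℝ)..R, f y) ^ 2

noncomputable def perMean (R : ℝ) (f : ℝ → ℝ) : ℝ :=
  (1 / R) * ∫ x in (0:ℝ)..R, f x

noncomputable def perCov (R : ℝ) (f g : ℝ → ℝ) : ℝ :=
  perMean R fun x => (f x - perMean R f) * (g x - perMean R g)

section IntervalIntegrable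

variable {f g : ℝ → ℝ} {μ : Measure ℝ} [IsLocallyFiniteMeasure μ] {a b : ℝ}

lemma IntervalIntegrable.sub_const_mul_sub_const
    (hf : IntervalIntegrable f μ a b) (hg : IntervalIntegrable g μ a b)
    (hfg : IntervalIntegrable (fun x => f x * g x) μ a b) (c d : ℝ) :
    IntervalIntegrable (fun x => (f x - c) * (g x - d)) μ a b := by
  have h := ((hfg.sub (hf.mul_const d)).sub (hg.const_mul c)).add
    (intervalIntegrable_const (c := c * d))
  refine h.congr fun x _ => ?_
  ring

lemma IntervalIntegrable.sub_const_sq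
    (hf : IntervalIntegrable f μ a b) (hf2 : IntervalIntegrable (fun x => f x ^ 2) μ a b)
    (c : ℝ) : IntervalIntegrable (fun x => (f x - c) ^ 2) μ a b := by
  simpa only [sq] using hf.sub_const_mul_sub_const hf (by simpa only [sq] using hf2) c c

end IntervalIntegrable

section Moments

variable {R : ℝ} {f g : ℝ → ℝ}

lemma perVar_eq_perMean (R : ℝ) (f : ℝ → ℝ) :
    perVar R f = perMean R fun x => (f x - perMean R f) ^ 2 :=
  rfl

lemma perVar_nonneg (hR : 0 ≤ R) (f : ℝ → ℝ) : 0 ≤ perVar R f :=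
  mul_nonneg (by positivity) (integral_nonneg hR fun _ _ => sq_nonneg _)

lemma perMean_add (hf : IntervalIntegrable f volume 0 R) (hg : IntervalIntegrable g volume 0 R) :
    perMean R (fun x => f x + g x) = perMean R f + perMean R g := by
  simp only [perMean, integral_add hf hg, mul_add]

lemma integral_sub_perMean (hR : R ≠ 0) (hf : IntervalIntegrable f volume 0 R) :
    ∫ x in (0:ℝ)..R, (f x - perMean R f) = 0 := by
  rw [integral_sub hf intervalIntegrable_const, intervalIntegral.integral_const, perMean,
    smul_eq_mul, sub_zero, ← mul_assoc, mul_one_div_cancel hR, one_mul, sub_self]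

lemma perVar_eq_perMean_sq_sub (hR : R ≠ 0) (hf : IntervalIntegrable f volume 0 R)
    (hf2 : IntervalIntegrable (fun x => f x ^ 2) volume 0 R) :
    perVar R f = perMean R (fun x => f x ^ 2) - perMean R f ^ 2 := by
  have hexp : ∀ x, (f x - perMean R f) ^ 2 = f x ^ 2 - 2 * perMean R f * f x + perMean R f ^ 2 :=
    fun x => by ring
  rw [perVar_eq_perMean, perMean, funext hexp, integral_add (hf2.sub (hf.const_mul _))
    intervalIntegrable_const, integral_sub hf2 (hf.const_mul _),
    intervalIntegral.integral_const_mul, intervalIntegral.integral_const]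
  simp only [perMean, smul_eq_mul, sub_zero]
  field_simp
  ring

lemma perVar_const_mul (R c : ℝ) (f : ℝ → ℝ) :
    perVar R (fun x => c * f x) = c ^ 2 * perVar R f := by
  have h (x : ℝ) : (c * f x - 1 / R * (c * ∫ y in (0:ℝ)..R, f y)) ^ 2
      = c ^ 2 * (f x - 1 / R * ∫ y in (0:ℝ)..R, f y) ^ 2 := by ring
  simp only [perVar, intervalIntegral.integral_const_mul, h]
  ring

lemma perVar_comp_div (hR : R ≠ 0) (f : ℝ → ℝ) : perVar R (fun x => f (x / R)) = perVar 1 f := by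
  have hmean : 1 / R * ∫ y in (0:ℝ)..R, f (y / R) = ∫ y in (0:ℝ)..1, f y := by
    rw [integral_comp_div _ hR]; simp [hR]
  simp only [perVar, hmean]
  rw [integral_comp_div (fun x => (f x - ∫ y in (0:ℝ)..1, f y) ^ 2) hR]
  simp [hR]

lemma perVar_add (hf : IntervalIntegrable f volume 0 R) (hg : IntervalIntegrable g volume 0 R)
    (hf2 : IntervalIntegrable (fun x => f x ^ 2) volume 0 R)
    (hg2 : IntervalIntegrable (fun x => g x ^ 2) volume 0 R)
    (hfg : IntervalIntegrable (fun x => f x * g x) volume 0 R) :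
    perVar R (fun x => f x + g x) = perVar R f + perVar R g + 2 * perCov R f g := by
  rw [perVar_eq_perMean, perMean_add hf hg, perVar_eq_perMean, perVar_eq_perMean, perCov]
  set m := perMean R f
  set m' := perMean R g
  have hexp (x : ℝ) : (f x + g x - (m + m')) ^ 2
      = (f x - m) ^ 2 + (g x - m') ^ 2 + 2 * ((f x - m) * (g x - m')) := by ring
  have hf2' := hf.sub_const_sq hf2 m
  have hg2' := hg.sub_const_sq hg2 m'
  simp only [perMean, hexp]
  rw [integral_add (hf2'.add hg2') ((hf.sub_const_mul_sub_const hg hfg m m').const_mul 2),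
    integral_add hf2' hg2', intervalIntegral.integral_const_mul]
  ring

lemma perCov_eq_perMean_mul (hR : R ≠ 0) (hf : IntervalIntegrable f volume 0 R)
    (hg : IntervalIntegrable g volume 0 R)
    (hfg : IntervalIntegrable (fun x => f x * g x) volume 0 R) :
    perCov R f g = perMean R fun x => (f x - perMean R f) * g x := by
  have hfg' : IntervalIntegrable (fun x => (f x - perMean R f) * g x) volume 0 R := by
    simpa using hf.sub_const_mul_sub_const hg hfg (perMean R f) 0
  have hcentered := integral_sub_perMean hR hf
  rw [perCov]
  generalize perMean R f = m at *
  generalize perMean R g = m'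
  have hexp (x : ℝ) : (f x - m) * (g x - m') = (f x - m) * g x - m' * (f x - m) := by ring
  rw [perMean, perMean, funext hexp,
    integral_sub hfg' ((hf.sub intervalIntegrable_const).const_mul _),
    intervalIntegral.integral_const_mul, hcentered, mul_zero, sub_zero]

lemma perMean_abs_sub_le_sqrt_perVar (hR : 0 < R) (hf : IntervalIntegrable f volume 0 R)
    (hf2 : IntervalIntegrable (fun x => f x ^ 2) volume 0 R) :
    perMean R (fun x => |f x - perMean R f|) ≤ √(perVar R f) := by
  have hf2' := hf.sub_const_sq hf2 (perMean R f)
  have habs := (hf.sub (intervalIntegrable_const (c := perMean R f))).abs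
  have hvar := perVar_eq_perMean_sq_sub hR.ne' habs (by simpa only [sq_abs] using hf2')
  simp only [sq_abs, ← perVar_eq_perMean] at hvar
  refine (le_abs_self _).trans (Real.abs_le_sqrt ?_)
  linarith [perVar_nonneg hR.le fun x => |f x - perMean R f|]

end Moments

section Periodic

variable {f g : ℝ → ℝ} {T : ℝ}

lemma Function.Periodic.intervalIntegral_nat_mul (hf : Function.Periodic f T) (hT : T ≠ 0)
    (hfi : IntervalIntegrable f volume 0 T) (n : ℕ) :
    ∫ x in (0:ℝ)..n * T, f x = n * ∫ x in (0:ℝ)..T, f x := by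
  simpa [zsmul_eq_mul] using hf.intervalIntegral_add_zsmul_eq n 0 (hf.intervalIntegrable₀ hT hfi)

lemma perMean_nat_mul (hf : Function.Periodic f T) (hT : T ≠ 0)
    (hfi : IntervalIntegrable f volume 0 T) {n : ℕ} (hn : n ≠ 0) :
    perMean (n * T) f = perMean T f := by
  rw [perMean, perMean, hf.intervalIntegral_nat_mul hT hfi]
  field_simp

lemma perVar_nat_mul (hf : Function.Periodic f T) (hT : T ≠ 0)
    (hfi : IntervalIntegrable f volume 0 T) (hf2 : IntervalIntegrable (fun x => f x ^ 2) volume 0 T)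
    {n : ℕ} (hn : n ≠ 0) : perVar (n * T) f = perVar T f := by
  have hsq : Function.Periodic (fun x => (f x - perMean T f) ^ 2) T := fun x => by simp only [hf x]
  rw [perVar_eq_perMean, perMean_nat_mul hf hT hfi hn,
    perMean_nat_mul hsq hT (hfi.sub_const_sq hf2 _) hn, perVar_eq_perMean]

lemma abs_integral_mul_le_of_integral_eq_zero {a b : ℝ} {K : ℝ≥0} (hab : a ≤ b)
    (hf : IntervalIntegrable f volume a b) (hf0 : ∫ x in a..b, f x = 0) (hg : LipschitzWith K g) :
    |∫ x in a..b, f x * g x| ≤ K * (b - a) * ∫ x in a..b, |f x| := by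
  have hfg : IntervalIntegrable (fun x => f x * (g x - g a)) volume a b :=
    hf.mul_continuousOn (hg.continuous.sub continuous_const).continuousOn
  have hshift : ∫ x in a..b, f x * (g x - g a) = ∫ x in a..b, f x * g x := by
    simp only [mul_sub]
    rw [integral_sub (hf.mul_continuousOn hg.continuous.continuousOn) (hf.mul_const _),
      intervalIntegral.integral_mul_const, hf0, zero_mul, sub_zero]
  have hpoint : ∀ x ∈ Set.Icc a b, |f x * (g x - g a)| ≤ K * (b - a) * |f x| := by
    intro x hx
    have hdist : dist x a ≤ b - a := by
      rw [Real.dist_eq, abs_of_nonneg (sub_nonneg.2 hx.1)]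
      linarith [hx.2]
    rw [abs_mul, mul_comm, ← Real.dist_eq]
    exact mul_le_mul_of_nonneg_right (hg.dist_le_mul_of_le hdist) (abs_nonneg _)
  calc |∫ x in a..b, f x * g x| = |∫ x in a..b, f x * (g x - g a)| := by rw [← hshift]
    _ ≤ ∫ x in a..b, |f x * (g x - g a)| := abs_integral_le_integral_abs hab
    _ ≤ ∫ x in a..b, K * (b - a) * |f x| := integral_mono_on hab hfg.abs (hf.abs.const_mul _) hpoint
    _ = K * (b - a) * ∫ x in a..b, |f x| := intervalIntegral.integral_const_mul _ _

lemma abs_integral_mul_le_of_periodic {K : ℝ≥0} (hT : 0 ≤ T) (hf : Function.Periodic f T)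
    (hfi : ∀ a b, IntervalIntegrable f volume a b) (hf0 : ∫ x in (0:ℝ)..T, f x = 0)
    (hg : LipschitzWith K g) (n : ℕ) :
    |∫ x in (0:ℝ)..n * T, f x * g x| ≤ K * T * ∫ x in (0:ℝ)..n * T, |f x| := by
  have hsplit (F : ℝ → ℝ) (hF : ∀ a b, IntervalIntegrable F volume a b) :
      ∫ x in (0:ℝ)..n * T, F x = ∑ k ∈ Finset.range n, ∫ x in k * T..(k + 1 : ℕ) * T, F x := by
    simpa using (sum_integral_adjacent_intervals (a := fun k : ℕ => k * T) fun k _ => hF _ _).symm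
  have hblock (k : ℕ) : |∫ x in k * T..(k + 1 : ℕ) * T, f x * g x|
      ≤ K * T * ∫ x in k * T..(k + 1 : ℕ) * T, |f x| := by
    have hend : ((k + 1 : ℕ) : ℝ) * T = k * T + T := by push_cast; ring
    have hzero : ∫ x in k * T..k * T + T, f x = 0 := by
      rw [hf.intervalIntegral_add_eq (k * T) 0, zero_add, hf0]
    rw [hend]
    simpa using abs_integral_mul_le_of_integral_eq_zero (by linarith) (hfi _ _) hzero hg
  rw [hsplit _ fun a b => (hfi a b).mul_continuousOn hg.continuous.continuousOn,
    hsplit _ fun a b => (hfi a b).abs, Finset.mul_sum]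
  exact (Finset.abs_sum_le_sum_abs _ _).trans (Finset.sum_le_sum fun k _ => hblock k)

lemma abs_perCov_le_of_periodic {K : ℝ≥0} {n : ℕ} (hT : 0 < T) (hn : n ≠ 0)
    (hf : Function.Periodic f T) (hfi : IntervalIntegrable f volume 0 T)
    (hf2 : IntervalIntegrable (fun x => f x ^ 2) volume 0 T) (hg : LipschitzWith K g) :
    |perCov (n * T) f g| ≤ K * T * √(perVar T f) := by
  have hnT : (n : ℝ) * T ≠ 0 := mul_ne_zero (Nat.cast_ne_zero.2 hn) hT.ne'
  have hfloc := hf.intervalIntegrable₀ hT.ne' hfi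
  have hgc := hg.continuous.continuousOn (s := Set.uIcc 0 (n * T))
  set f₀ := fun x => f x - perMean T f with hf₀
  have hf₀per : Function.Periodic f₀ T := fun x => by simp only [hf₀, hf x]
  have hf₀loc : ∀ a b, IntervalIntegrable f₀ volume a b := fun a b =>
    (hfloc a b).sub intervalIntegrable_const
  have hcov : perCov (n * T) f g = perMean (n * T) fun x => f₀ x * g x := by
    rw [perCov_eq_perMean_mul hnT (hfloc _ _) (hg.continuous.intervalIntegrable _ _)
      ((hfloc _ _).mul_continuousOn hgc), perMean_nat_mul hf hT.ne' hfi hn]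
  have hmix := abs_integral_mul_le_of_periodic hT.le hf₀per hf₀loc
    (integral_sub_perMean hT.ne' hfi) hg n
  have habsper : Function.Periodic (fun x => |f₀ x|) T := fun x => by simp only [hf₀per x]
  rw [habsper.intervalIntegral_nat_mul hT.ne' (hf₀loc 0 T).abs] at hmix
  have hcs := perMean_abs_sub_le_sqrt_perVar hT hfi hf2
  calc |perCov (n * T) f g| = 1 / (n * T) * |∫ x in (0:ℝ)..n * T, f₀ x * g x| := by
        rw [hcov, perMean, abs_mul, abs_of_pos (by positivity)]
    _ ≤ 1 / (n * T) * (K * T * (n * ∫ x in (0:ℝ)..T, |f₀ x|)) := by gcongr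
    _ = K * T * perMean T fun x => |f₀ x| := by
        rw [perMean]
        field_simp
    _ ≤ K * T * √(perVar T f) := by gcongr

end Periodic

lemma lipschitzWith_const_mul_comp_div {h : ℝ → ℝ} {c K R : ℝ} (hc : 0 ≤ c) (hR : 0 < R)
    (hh : Differentiable ℝ h) (hK : ∀ x, |deriv h x| ≤ K) :
    LipschitzWith (c * K / R).toNNReal fun x => c * h (x / R) := by
  have hK0 : 0 ≤ K := (abs_nonneg _).trans (hK 0)
  have hLip : LipschitzWith K.toNNReal h :=
    lipschitzWith_of_nnnorm_deriv_le hh fun x => by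
      rw [← NNReal.coe_le_coe, coe_nnnorm, Real.norm_eq_abs, Real.coe_toNNReal _ hK0]
      exact hK x
  refine LipschitzWith.of_dist_le' fun x y => ?_
  have hxy := hLip.dist_le_mul (x / R) (y / R)
  rw [Real.coe_toNNReal _ hK0] at hxy
  calc dist (c * h (x / R)) (c * h (y / R)) = c * dist (h (x / R)) (h (y / R)) := by
        rw [Real.dist_eq, Real.dist_eq, ← mul_sub, abs_mul, abs_of_nonneg hc]
    _ ≤ c * (K * dist (x / R) (y / R)) := by gcongr
    _ = c * K / R * dist x y := by
        rw [Real.dist_eq, Real.dist_eq, ← sub_div, abs_div, abs_of_pos hR]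
        ring

theorem var_recursion_step_general (H h : ℝ → ℝ) (Rprev γp K₁ : ℝ) (r : ℕ)
    (hRprev : 0 < Rprev) (hr : 0 < r) (hγp : 0 < γp)
    (hHper : Function.Periodic H Rprev)
    (hHint : IntervalIntegrable H volume 0 Rprev)
    (hHsq : IntervalIntegrable (fun x => H x ^ 2) volume 0 Rprev)
    (hhC1 : ContDiff ℝ 1 h)
    (hhvar : perVar 1 h = 1) (hK₁ : ∀ x, |deriv h x| ≤ K₁) :
    |perVar (r * Rprev) (fun x => H x + γp * h (x / (r * Rprev)))
        - perVar Rprev H - γp ^ 2|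
      ≤ 2 * γp * K₁ * (r : ℝ)⁻¹ * Real.sqrt (perVar Rprev H) := by
  set R := (r : ℝ) * Rprev
  have hR : 0 < R := mul_pos (by exact_mod_cast hr) hRprev
  set G := fun x => γp * h (x / R)
  have hGc : Continuous G := by fun_prop
  have hGLip : LipschitzWith (γp * K₁ / R).toNNReal G :=
    lipschitzWith_const_mul_comp_div hγp.le hR (hhC1.differentiable one_ne_zero) hK₁
  have hHloc := hHper.intervalIntegrable₀ hRprev.ne' hHint
  have hHsqper : Function.Periodic (fun x => H x ^ 2) Rprev := fun x => by simp only [hHper x]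
  have hHR : perVar R H = perVar Rprev H := perVar_nat_mul hHper hRprev.ne' hHint hHsq hr.ne'
  have hGR : perVar R G = γp ^ 2 := by
    rw [perVar_const_mul, perVar_comp_div hR.ne', hhvar, mul_one]
  have hcov := abs_perCov_le_of_periodic hRprev hr.ne' hHper hHint hHsq hGLip
  rw [perVar_add (hHloc 0 R) (hGc.intervalIntegrable 0 R)
    (hHsqper.intervalIntegrable₀ hRprev.ne' hHsq 0 R) ((hGc.pow 2).intervalIntegrable 0 R)
    ((hHloc 0 R).mul_continuousOn hGc.continuousOn), hHR, hGR]
  have hK₁0 : 0 ≤ K₁ := (abs_nonneg _).trans (hK₁ 0)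
  rw [Real.coe_toNNReal _ (by positivity)] at hcov
  calc |perVar Rprev H + γp ^ 2 + 2 * perCov R H G - perVar Rprev H - γp ^ 2|
      = 2 * |perCov R H G| := by
        rw [← abs_two, ← abs_mul]
        congr 1
        ring
    _ ≤ 2 * (γp * K₁ / R * Rprev * √(perVar Rprev H)) := by gcongr
    _ = 2 * γp * K₁ * (r : ℝ)⁻¹ * √(perVar Rprev H) := by
        simp only [R]
        field_simp

/-- Variance recursion: `|Var(Hᵖ) - Var(Hᵖ⁻¹) - γₚ²| ≤ 2 γₚ K₁ rₚ⁻¹ √Var(Hᵖ⁻¹)` for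
`Hᵖ = Hᵖ⁻¹ + γₚ hₚ(·/Rₚ)`, `Rₚ = rₚ R_{p-1}`. -/
theorem var_recursion_step (H h : ℝ → ℝ) (Rprev γp K₁ : ℝ) (r : ℕ)
    (hRprev : 0 < Rprev) (hr : 0 < r) (hγp : 0 < γp)
    (hHper : Function.Periodic H Rprev) (hHmeas : Measurable H)
    (hHint : IntervalIntegrable H volume 0 Rprev)
    (hHsq : IntervalIntegrable (fun x => H x ^ 2) volume 0 Rprev)
    (hhC1 : ContDiff ℝ 1 h) (hhper : Function.Periodic h 1)
    (hhvar : perVar 1 h = 1) (hK₁ : ∀ x, |deriv h x| ≤ K₁) :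
    |perVar (r * Rprev) (fun x => H x + γp * h (x / (r * Rprev)))
        - perVar Rprev H - γp ^ 2|
      ≤ 2 * γp * K₁ * (r : ℝ)⁻¹ * Real.sqrt (perVar Rprev H) :=
  var_recursion_step_general H h Rprev γp K₁ r hRprev hr hγp hHper hHint hHsq hhC1 hhvar hK₁
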